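/- For every real T ≥ 0 and every integer g ≥ 2, the series Σ_{λ ∈ Λ_r^A} exp(−(T/2) c_λ^A) (d_λ^A)^{2−2g} converges for every integer r ≥ 1, and lim_{r→∞} Σ_{λ ∈ Λ_r^A} exp(−(T/2) c_λ^A) (d_λ^A)^{2−2g} = 1. (This is the higher-genus Yang–Mills partition function limit for the special unitary groups SU(r+1).) -/

import Mathlib

open Filter

/-- The Casimir eigenvalue
`c_λ^A = (1/(r+1)) Σ_{i=1}^{r+1} λ_i (λ_i + r + 2 - 2i) - (1/(r+1)²)(Σ_{i=1}^{r+1} λ_i)²`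
for a dominant weight `λ ∈ ℕ^{r+1}` of type `A_r` (indices here are 0-based). -/
noncomputable def casimirA (r : ℕ) (lam : Fin (r + 1) → ℕ) : ℝ :=
  (1 / ((r : ℝ) + 1)) *
      ∑ i : Fin (r + 1),
        (lam i : ℝ) * ((lam i : ℝ) + (r : ℝ) + 2 - 2 * (((i : ℕ) : ℝ) + 1)) -
    (1 / ((r : ℝ) + 1) ^ 2) * (∑ i : Fin (r + 1), (lam i : ℝ)) ^ 2

/-- The dimension `d_λ^A = ∏_{1≤i<j≤r+1} (λ_i - λ_j + j - i)/(j - i)` of the irreducible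
representation of `SU(r+1)` with highest weight `λ` (indices here are 0-based). -/
noncomputable def dimA (r : ℕ) (lam : Fin (r + 1) → ℕ) : ℝ :=
  ∏ i : Fin (r + 1), ∏ j ∈ Finset.Ioi i,
    (((lam i : ℝ) - (lam j : ℝ) + ((j : ℕ) : ℝ) - ((i : ℕ) : ℝ)) /
      (((j : ℕ) : ℝ) - ((i : ℕ) : ℝ)))

namespace YMA

open Finset Real

/-- gap sequence of a dominant weight -/
def gaps (r : ℕ) (l : Fin (r + 1) → ℕ) : Fin r → ℕ := fun k => l k.castSucc - l k.succ

lemma gaps_cast {r : ℕ} {l : Fin (r + 1) → ℕ} (hl : Antitone l) (k : Fin r) :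
    ((gaps r l k : ℤ)) = (l k.castSucc : ℤ) - (l k.succ : ℤ) := by
  have h : l k.succ ≤ l k.castSucc := hl (Fin.castSucc_lt_succ : k.castSucc < k.succ).le
  simp [gaps, Nat.cast_sub h]

lemma eq_sum_gaps {r : ℕ} {l : Fin (r + 1) → ℕ} (hl : Antitone l)
    (h0 : l (Fin.last r) = 0) :
    ∀ i : Fin (r + 1), (l i : ℤ) =
      ∑ k ∈ Finset.univ.filter (fun k : Fin r => (i : ℕ) ≤ (k : ℕ)), (gaps r l k : ℤ) := by
  refine Fin.reverseInduction ?_ ?_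
  · rw [h0, Finset.filter_false_of_mem, Finset.sum_empty]
    · simp
    · intro k _
      simp only [Fin.val_last, not_le]
      exact k.isLt
  · intro k ih
    have hset : (Finset.univ.filter (fun k' : Fin r => ((k.castSucc : ℕ)) ≤ (k' : ℕ)))
        = insert k (Finset.univ.filter (fun k' : Fin r => ((k.succ : ℕ)) ≤ (k' : ℕ))) := by
      ext k'
      simp only [Finset.mem_filter, Finset.mem_univ, true_and, Finset.mem_insert,
        Fin.coe_castSucc, Fin.val_succ]
      constructor
      · intro h
        rcases eq_or_lt_of_le h with h' | h'
        · left; exact Fin.ext h'.symm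
        · right; omega
      · rintro (rfl | h) <;> omega
    rw [hset, Finset.sum_insert (by simp), ← ih, gaps_cast hl]
    ring

lemma gaps_injective {r : ℕ} :
    Function.Injective
      (fun l : {l : Fin (r + 1) → ℕ // Antitone l ∧ l (Fin.last r) = 0} => gaps r l.1) := by
  intro l₁ l₂ h
  ext i
  have h1 := eq_sum_gaps l₁.2.1 l₁.2.2 i
  have h2 := eq_sum_gaps l₂.2.1 l₂.2.2 i
  have : (l₁.1 i : ℤ) = (l₂.1 i : ℤ) := by rw [h1, h2, show gaps r l₁.1 = gaps r l₂.1 from h]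
  exact_mod_cast this

lemma gaps_zero {r : ℕ} {l : Fin (r + 1) → ℕ} (hl : Antitone l)
    (h0 : l (Fin.last r) = 0) (hg : gaps r l = fun _ => 0) : l = fun _ => 0 := by
  ext i
  have h1 := eq_sum_gaps hl h0 i
  rw [hg] at h1
  simpa using h1


lemma sum_natcast_range (n : ℕ) : ∑ i ∈ Finset.range n, (i : ℝ) = n * (n - 1) / 2 := by
  induction n with
  | zero => simp
  | succ n ih => rw [Finset.sum_range_succ, ih]; push_cast; ring

lemma casimirA_nonneg {r : ℕ} {lam : Fin (r + 1) → ℕ} (hl : Antitone lam) :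
    0 ≤ casimirA r lam := by
  set f : Fin (r + 1) → ℝ := fun i => (lam i : ℝ) with hf
  set w : Fin (r + 1) → ℝ := fun i => (r : ℝ) + 2 - 2 * (((i : ℕ) : ℝ) + 1) with hw
  set N : ℝ := (r : ℝ) + 1 with hN
  have hNpos : (0 : ℝ) < N := by positivity
  have hfa : Antitone f := fun i j hij => by
    simpa [hf] using (Nat.cast_le (α := ℝ)).mpr (hl hij)
  have hwa : Antitone w := by
    intro i j hij
    have : ((i : ℕ) : ℝ) ≤ ((j : ℕ) : ℝ) := Nat.cast_le.mpr hij
    simp only [hw]; linarith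
  have h1 : ∑ i : Fin (r + 1), (((i : ℕ) : ℝ)) = (N * (N - 1)) / 2 := by
    rw [Fin.sum_univ_eq_sum_range (fun i => (i : ℝ)), sum_natcast_range (r + 1)]
    push_cast [hN]; ring
  have hw0 : ∑ i : Fin (r + 1), w i = 0 := by
    have h2 : ∑ i : Fin (r + 1), w i
        = ∑ i : Fin (r + 1), (((r : ℝ) + 2) - 2 * (((i : ℕ) : ℝ) + 1)) := rfl
    rw [h2, Finset.sum_sub_distrib]
    have h3 : ∑ i : Fin (r + 1), (2 : ℝ) * (((i : ℕ) : ℝ) + 1)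
        = 2 * ((N * (N - 1)) / 2) + 2 * N := by
      rw [← Finset.mul_sum, Finset.sum_add_distrib, h1]
      simp only [Finset.sum_const, Finset.card_univ, Fintype.card_fin, nsmul_eq_mul, mul_one]
      push_cast [hN]; ring
    simp only [Finset.sum_const, Finset.card_univ, Fintype.card_fin, nsmul_eq_mul]
    rw [h3, hN]
    push_cast
    ring
  have hcheb : 0 ≤ ∑ i : Fin (r + 1), f i * w i := by
    have h := (hfa.monovary hwa).sum_mul_sum_le_card_mul_sum (α := ℝ)
    rw [hw0, mul_zero, Fintype.card_fin] at h
    have hc : ((r + 1 : ℕ) : ℝ) > 0 := by positivity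
    nlinarith
  have hcs : (∑ i : Fin (r + 1), f i) ^ 2 ≤ N * ∑ i : Fin (r + 1), f i ^ 2 := by
    have h := sq_sum_le_card_mul_sum_sq (s := (Finset.univ : Finset (Fin (r + 1)))) (f := f)
    simpa [hN] using h
  have hsum : ∑ i : Fin (r + 1),
      (lam i : ℝ) * ((lam i : ℝ) + (r : ℝ) + 2 - 2 * (((i : ℕ) : ℝ) + 1))
      = ∑ i : Fin (r + 1), (f i ^ 2 + f i * w i) :=
    Finset.sum_congr rfl (fun i _ => by simp only [hf, hw]; ring)
  have hexp : casimirA r lam = (1 / N) * (∑ i : Fin (r + 1), (f i ^ 2 + f i * w i))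
      - (1 / N ^ 2) * (∑ i : Fin (r + 1), f i) ^ 2 := by
    rw [casimirA, hsum]
  rw [hexp, Finset.sum_add_distrib]
  have h2 : (1 / N ^ 2) * (∑ i : Fin (r + 1), f i) ^ 2
      ≤ (1 / N) * ∑ i : Fin (r + 1), f i ^ 2 := by
    rw [div_mul_eq_mul_div, div_mul_eq_mul_div, div_le_div_iff₀ (by positivity) hNpos]
    calc (1 * (∑ i : Fin (r + 1), f i) ^ 2) * N = ((∑ i : Fin (r + 1), f i) ^ 2) * N := by ring
    _ ≤ (N * ∑ i : Fin (r + 1), f i ^ 2) * N := mul_le_mul_of_nonneg_right hcs hNpos.le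
    _ = 1 * (∑ i : Fin (r + 1), f i ^ 2) * N ^ 2 := by ring
  have h3 : 0 ≤ (1 / N) * ∑ i : Fin (r + 1), f i * w i := by positivity
  have hd : (1 / N) * (∑ i : Fin (r + 1), f i ^ 2 + ∑ i : Fin (r + 1), f i * w i)
      = (1 / N) * ∑ i : Fin (r + 1), f i ^ 2 + (1 / N) * ∑ i : Fin (r + 1), f i * w i := by ring
  rw [hd]
  linarith

lemma one_le_factor {r : ℕ} {lam : Fin (r + 1) → ℕ} (hl : Antitone lam)
    {i j : Fin (r + 1)} (hij : i < j) :
    1 ≤ ((lam i : ℝ) - (lam j : ℝ) + ((j : ℕ) : ℝ) - ((i : ℕ) : ℝ)) /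
      (((j : ℕ) : ℝ) - ((i : ℕ) : ℝ)) := by
  have hvl : (i : ℕ) < (j : ℕ) := hij
  have hden : (0 : ℝ) < ((j : ℕ) : ℝ) - ((i : ℕ) : ℝ) := by
    have : ((i : ℕ) : ℝ) < ((j : ℕ) : ℝ) := Nat.cast_lt.mpr hvl
    linarith
  rw [le_div_iff₀ hden, one_mul]
  have : (lam j : ℝ) ≤ (lam i : ℝ) := Nat.cast_le.mpr (hl hij.le)
  linarith

lemma one_le_prod_real {ι : Type*} {s : Finset ι} {f : ι → ℝ} (h : ∀ i ∈ s, 1 ≤ f i) :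
    1 ≤ ∏ i ∈ s, f i := by
  calc (1 : ℝ) = ∏ _i ∈ s, 1 := by simp
  _ ≤ ∏ i ∈ s, f i := Finset.prod_le_prod (fun i _ => zero_le_one) h

lemma one_le_dimA {r : ℕ} {lam : Fin (r + 1) → ℕ} (hl : Antitone lam) :
    1 ≤ dimA r lam := by
  apply one_le_prod_real
  intro i _
  apply one_le_prod_real
  intro j hj
  exact one_le_factor hl (Finset.mem_Ioi.mp hj)

lemma casimirA_zero (r : ℕ) : casimirA r (fun _ => 0) = 0 := by
  simp [casimirA]

lemma dimA_zero (r : ℕ) : dimA r (fun _ => 0) = 1 := by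
  rw [dimA]
  apply Finset.prod_eq_one
  intro i _
  apply Finset.prod_eq_one
  intro j hj
  have hij : i < j := Finset.mem_Ioi.mp hj
  have hden : (0 : ℝ) < ((j : ℕ) : ℝ) - ((i : ℕ) : ℝ) := by
    have : ((i : ℕ) : ℝ) < ((j : ℕ) : ℝ) := Nat.cast_lt.mpr hij
    linarith
  rw [Nat.cast_zero]
  rw [div_eq_one_iff_eq hden.ne']
  ring


lemma gaps_castR {r : ℕ} {l : Fin (r + 1) → ℕ} (hl : Antitone l) (k : Fin r) :
    ((gaps r l k : ℝ)) = (l k.castSucc : ℝ) - (l k.succ : ℝ) := by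
  have h : l k.succ ≤ l k.castSucc := hl (Fin.castSucc_lt_succ : k.castSucc < k.succ).le
  simp [gaps, Nat.cast_sub h]

noncomputable def sexp (r : ℕ) (k : Fin r) : ℝ :=
  (harmonic (r - (k : ℕ)) : ℝ) + (harmonic ((k : ℕ) + 1) : ℝ)

lemma harmonic_cast (n : ℕ) :
    (harmonic n : ℝ) = ∑ m ∈ Finset.range n, ((m : ℝ) + 1)⁻¹ := by
  rw [harmonic]
  push_cast
  rfl

lemma H1sum {r : ℕ} (i : Fin (r + 1)) :
    ∑ j ∈ Finset.Ioi i, (((j : ℕ) : ℝ) - ((i : ℕ) : ℝ))⁻¹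
      = (harmonic (r - (i : ℕ)) : ℝ) := by
  rw [harmonic_cast]
  refine Finset.sum_nbij' (fun j => (j : ℕ) - (i : ℕ) - 1)
    (fun m => (⟨min ((i : ℕ) + m + 1) r, by omega⟩ : Fin (r + 1)))
    ?_ ?_ ?_ ?_ ?_
  · intro j hj
    have hij : i < j := Finset.mem_Ioi.mp hj
    have h1 : (i : ℕ) < (j : ℕ) := hij
    have h2 := j.isLt
    simp only [Finset.mem_range]
    omega
  · intro m hm
    have hm' := Finset.mem_range.mp hm
    simp only [Finset.mem_Ioi, Fin.lt_def]
    omega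
  · intro j hj
    have hij' : i < j := Finset.mem_Ioi.mp hj
    have hij : (i : ℕ) < (j : ℕ) := hij'
    have h2 := j.isLt
    apply Fin.ext
    simp only []
    omega
  · intro m hm
    have hm' := Finset.mem_range.mp hm
    simp only []
    omega
  · intro j hj
    have hij' : i < j := Finset.mem_Ioi.mp hj
    have hij : (i : ℕ) < (j : ℕ) := hij'
    congr 1
    have h3 : ((j : ℕ) - (i : ℕ) - 1 : ℕ) + 1 = (j : ℕ) - (i : ℕ) := by omega
    have h4 : (((j : ℕ) - (i : ℕ) - 1 + 1 : ℕ) : ℝ) = (((j : ℕ) - (i : ℕ) - 1 : ℕ) : ℝ) + 1 := by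
      push_cast; ring
    rw [← h4, h3, Nat.cast_sub hij.le]

lemma H2sum {r : ℕ} (j : Fin (r + 1)) :
    ∑ i ∈ Finset.Iio j, (((j : ℕ) : ℝ) - ((i : ℕ) : ℝ))⁻¹ = (harmonic (j : ℕ) : ℝ) := by
  rw [harmonic_cast]
  refine Finset.sum_nbij' (fun i => (j : ℕ) - (i : ℕ) - 1)
    (fun m => (⟨(j : ℕ) - m - 1, by have := j.isLt; omega⟩ : Fin (r + 1)))
    ?_ ?_ ?_ ?_ ?_
  · intro i hi
    have hij' : i < j := Finset.mem_Iio.mp hi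
    have hij : (i : ℕ) < (j : ℕ) := hij'
    simp only [Finset.mem_range]
    omega
  · intro m hm
    have hm' := Finset.mem_range.mp hm
    simp only [Finset.mem_Iio, Fin.lt_def]
    omega
  · intro i hi
    have hij' : i < j := Finset.mem_Iio.mp hi
    have hij : (i : ℕ) < (j : ℕ) := hij'
    apply Fin.ext
    simp only []
    omega
  · intro m hm
    have hm' := Finset.mem_range.mp hm
    simp only []
    omega
  · intro i hi
    have hij' : i < j := Finset.mem_Iio.mp hi
    have hij : (i : ℕ) < (j : ℕ) := hij'
    congr 1
    have h3 : ((j : ℕ) - (i : ℕ) - 1 : ℕ) + 1 = (j : ℕ) - (i : ℕ) := by omega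
    have h4 : (((j : ℕ) - (i : ℕ) - 1 + 1 : ℕ) : ℝ) = (((j : ℕ) - (i : ℕ) - 1 : ℕ) : ℝ) + 1 := by
      push_cast; ring
    rw [← h4, h3, Nat.cast_sub hij.le]


lemma core_log {m : ℕ} (hm : 1 ≤ m) {x u v : ℝ} (hu : 0 ≤ u) (hv : 0 ≤ v)
    (hux : u ≤ x) (hvx : v ≤ x) :
    (2 * (m : ℝ))⁻¹ * (Real.log (u + 1) + Real.log (v + 1))
      ≤ Real.log ((x + m) / m) := by
  have hmp : (0 : ℝ) < m := by exact_mod_cast hm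
  have hx : 0 ≤ x := le_trans hu hux
  have h1 : Real.log (u + 1) + Real.log (v + 1) ≤ 2 * Real.log (x + 1) := by
    rw [← Real.log_mul (by positivity) (by positivity)]
    have h2 : (u + 1) * (v + 1) ≤ (x + 1) ^ 2 := by nlinarith
    calc Real.log ((u + 1) * (v + 1)) ≤ Real.log ((x + 1) ^ 2) :=
          Real.log_le_log (by positivity) h2
    _ = 2 * Real.log (x + 1) := by rw [Real.log_pow]; norm_num
  have h2 : Real.log (x + 1) ≤ (m : ℝ) * Real.log ((x + m) / m) := by
    have hb : x + 1 ≤ ((x + m) / m) ^ m := by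
      have h3 := one_add_mul_le_pow (a := x / m) (le_trans (by norm_num) (div_nonneg hx hmp.le)) m
      have h4 : (1 : ℝ) + (m : ℝ) * (x / m) = x + 1 := by field_simp; ring
      have h5 : (1 : ℝ) + x / m = (x + m) / m := by field_simp; ring
      rw [h4, h5] at h3
      exact h3
    calc Real.log (x + 1) ≤ Real.log (((x + m) / m) ^ m) :=
          Real.log_le_log (by positivity) hb
    _ = (m : ℝ) * Real.log ((x + m) / m) := by rw [Real.log_pow]
  have hL : 0 ≤ Real.log ((x + m) / m) := by
    apply Real.log_nonneg
    rw [le_div_iff₀ hmp]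
    linarith
  rw [inv_mul_le_iff₀ (by positivity)]
  nlinarith

lemma log_dimA_ge {r : ℕ} {l : Fin (r + 1) → ℕ} (hl : Antitone l)
    (h0 : l (Fin.last r) = 0) :
    ∑ k : Fin r, (sexp r k / 2) * Real.log ((gaps r l k : ℝ) + 1)
      ≤ Real.log (dimA r l) := by
  classical
  set a := gaps r l with ha
  set La : Fin (r + 1) → ℝ := fun i =>
    if h : (i : ℕ) < r then Real.log ((a ⟨(i : ℕ), h⟩ : ℝ) + 1) else 0 with hLa
  set Lb : Fin (r + 1) → ℝ := fun j =>
    if h : 0 < (j : ℕ) then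
      Real.log ((a ⟨(j : ℕ) - 1, by have := j.isLt; omega⟩ : ℝ) + 1) else 0 with hLb
  have haR : ∀ k : Fin r, (0 : ℝ) ≤ (a k : ℝ) := fun k => Nat.cast_nonneg _
  -- the logarithm of dimA as a double sum
  have hlog : Real.log (dimA r l) = ∑ i : Fin (r + 1), ∑ j ∈ Finset.Ioi i,
      Real.log (((l i : ℝ) - (l j : ℝ) + ((j : ℕ) : ℝ) - ((i : ℕ) : ℝ)) /
        (((j : ℕ) : ℝ) - ((i : ℕ) : ℝ))) := by
    rw [dimA, Real.log_prod]
    · refine Finset.sum_congr rfl fun i _ => Real.log_prod fun j hj => ?_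
      exact (lt_of_lt_of_le zero_lt_one (one_le_factor hl (Finset.mem_Ioi.mp hj))).ne'
    · intro i _
      have : (1 : ℝ) ≤ ∏ j ∈ Finset.Ioi i,
          (((l i : ℝ) - (l j : ℝ) + ((j : ℕ) : ℝ) - ((i : ℕ) : ℝ)) /
            (((j : ℕ) : ℝ) - ((i : ℕ) : ℝ))) :=
        one_le_prod_real fun j hj => one_le_factor hl (Finset.mem_Ioi.mp hj)
      linarith
  -- pointwise estimate
  have hpair : ∀ i : Fin (r + 1), ∀ j ∈ Finset.Ioi i,
      (2 * (((j : ℕ) : ℝ) - ((i : ℕ) : ℝ)))⁻¹ * (La i + Lb j)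
        ≤ Real.log (((l i : ℝ) - (l j : ℝ) + ((j : ℕ) : ℝ) - ((i : ℕ) : ℝ)) /
            (((j : ℕ) : ℝ) - ((i : ℕ) : ℝ))) := by
    intro i j hj
    have hij : i < j := Finset.mem_Ioi.mp hj
    have hijv : (i : ℕ) < (j : ℕ) := hij
    have hjr := j.isLt
    have hir : (i : ℕ) < r := by omega
    have hj1 : 0 < (j : ℕ) := by omega
    set k₁ : Fin r := ⟨(i : ℕ), hir⟩ with hk₁
    set k₂ : Fin r := ⟨(j : ℕ) - 1, by omega⟩ with hk₂
    have hLai : La i = Real.log ((a k₁ : ℝ) + 1) := by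
      simp only [hLa]
      rw [dif_pos hir]
    have hLbj : Lb j = Real.log ((a k₂ : ℝ) + 1) := by
      simp only [hLb]
      rw [dif_pos hj1]
    set x : ℝ := (l i : ℝ) - (l j : ℝ) with hxdef
    have hu : (a k₁ : ℝ) ≤ x := by
      rw [ha, gaps_castR hl]
      have e1 : k₁.castSucc = i := by apply Fin.ext; simp [hk₁]
      have e2 : (l j : ℝ) ≤ (l k₁.succ : ℝ) := by
        apply Nat.cast_le.mpr
        apply hl
        rw [Fin.le_def]
        simp only [Fin.val_succ, hk₁]
        omega
      rw [e1]
      simp only [hxdef]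
      linarith
    have hv : (a k₂ : ℝ) ≤ x := by
      rw [ha, gaps_castR hl]
      have e1 : k₂.succ = j := by apply Fin.ext; simp [hk₂]; omega
      have e2 : (l k₂.castSucc : ℝ) ≤ (l i : ℝ) := by
        apply Nat.cast_le.mpr
        apply hl
        rw [Fin.le_def]
        simp only [Fin.coe_castSucc, hk₂]
        omega
      rw [e1]
      simp only [hxdef]
      linarith
    have hcore := core_log (m := (j : ℕ) - (i : ℕ)) (by omega) (haR k₁) (haR k₂) hu hv
    rw [hLai, hLbj]
    have hcast : ((((j : ℕ) - (i : ℕ) : ℕ)) : ℝ) = ((j : ℕ) : ℝ) - ((i : ℕ) : ℝ) :=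
      Nat.cast_sub hijv.le
    rw [hcast] at hcore
    have hnum : x + (((j : ℕ) : ℝ) - ((i : ℕ) : ℝ))
        = (l i : ℝ) - (l j : ℝ) + ((j : ℕ) : ℝ) - ((i : ℕ) : ℝ) := by
      simp only [hxdef]; ring
    rw [hnum] at hcore
    exact hcore
  have hsum1 : ∑ i : Fin (r + 1), ∑ j ∈ Finset.Ioi i,
      (2 * (((j : ℕ) : ℝ) - ((i : ℕ) : ℝ)))⁻¹ * (La i + Lb j) ≤ Real.log (dimA r l) := by
    rw [hlog]
    exact Finset.sum_le_sum fun i _ => Finset.sum_le_sum fun j hj => hpair i j hj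
  refine le_trans (le_of_eq ?_) hsum1
  have hexp : ∀ (i j : Fin (r + 1)),
      (2 * (((j : ℕ) : ℝ) - ((i : ℕ) : ℝ)))⁻¹ * (La i + Lb j)
      = La i * ((((j : ℕ) : ℝ) - ((i : ℕ) : ℝ))⁻¹ / 2)
        + Lb j * ((((j : ℕ) : ℝ) - ((i : ℕ) : ℝ))⁻¹ / 2) := by
    intro i j
    rw [mul_inv]
    ring
  have hswap : ∑ i : Fin (r + 1), ∑ j ∈ Finset.Ioi i,
        Lb j * ((((j : ℕ) : ℝ) - ((i : ℕ) : ℝ))⁻¹ / 2)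
      = ∑ j : Fin (r + 1), ∑ i ∈ Finset.Iio j,
        Lb j * ((((j : ℕ) : ℝ) - ((i : ℕ) : ℝ))⁻¹ / 2) := by
    apply Finset.sum_comm'
    intro i j
    simp [Finset.mem_Ioi, Finset.mem_Iio]
  have hsplit : ∑ i : Fin (r + 1), ∑ j ∈ Finset.Ioi i,
      (2 * (((j : ℕ) : ℝ) - ((i : ℕ) : ℝ)))⁻¹ * (La i + Lb j)
    = (∑ i : Fin (r + 1), La i * ((harmonic (r - (i : ℕ)) : ℝ) / 2))
      + ∑ j : Fin (r + 1), Lb j * ((harmonic (j : ℕ) : ℝ) / 2) := by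
    simp only [hexp, Finset.sum_add_distrib]
    congr 1
    · refine Finset.sum_congr rfl fun i _ => ?_
      rw [← Finset.mul_sum, ← Finset.sum_div, H1sum i]
    · rw [hswap]
      refine Finset.sum_congr rfl fun j _ => ?_
      rw [← Finset.mul_sum, ← Finset.sum_div, H2sum j]
  rw [hsplit]
  have e1 : ∀ k : Fin r, La k.castSucc = Real.log ((a k : ℝ) + 1) := by
    intro k
    simp only [hLa, Fin.coe_castSucc]
    rw [dif_pos k.isLt]
  have e2 : La (Fin.last r) = 0 := by
    simp only [hLa, Fin.val_last]
    rw [dif_neg (lt_irrefl r)]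
  have e3 : ∀ k : Fin r, Lb k.succ = Real.log ((a k : ℝ) + 1) := by
    intro k
    simp only [hLb, Fin.val_succ]
    rw [dif_pos (Nat.succ_pos _)]
    congr 1
  have e4 : Lb 0 = 0 := by
    simp only [hLb]
    rw [dif_neg (by simp)]
  rw [Fin.sum_univ_castSucc (f := fun i => La i * ((harmonic (r - (i : ℕ)) : ℝ) / 2)),
    Fin.sum_univ_succ (f := fun j => Lb j * ((harmonic (j : ℕ) : ℝ) / 2))]
  simp only [e1, e2, e3, e4, zero_mul, add_zero, zero_add, Fin.coe_castSucc, Fin.val_succ]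
  rw [← Finset.sum_add_distrib]
  refine Finset.sum_congr rfl fun k _ => ?_
  rw [sexp]
  ring


lemma summable_shift2 : Summable (fun n : ℕ => ((n : ℝ) + 2) ^ (-(2 : ℝ))) := by
  have h : Summable (fun n : ℕ => ((n : ℝ)) ^ (-(2 : ℝ))) :=
    Real.summable_nat_rpow.mpr (by norm_num)
  have h2 := (summable_nat_add_iff 2).mpr h
  refine h2.congr fun n => ?_
  push_cast
  ring_nf

lemma tsum_shift2_le : (∑' n : ℕ, ((n : ℝ) + 2) ^ (-(2 : ℝ))) ≤ 1 := by
  apply summable_shift2.tsum_le_of_sum_le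
  intro s
  obtain ⟨N, hN⟩ := s.exists_nat_subset_range
  have hterm : ∀ n : ℕ, ((n : ℝ) + 2) ^ (-(2 : ℝ)) ≤ 1 / ((n : ℝ) + 1) - 1 / ((n : ℝ) + 2) := by
    intro n
    have e1 : ((n : ℝ) + 2) ^ (-(2 : ℝ)) = (((n : ℝ) + 2) ^ (2 : ℕ))⁻¹ := by
      rw [← Real.rpow_natCast ((n : ℝ) + 2) 2, ← Real.rpow_neg (by positivity)]
      norm_num
    have e2 : 1 / ((n : ℝ) + 1) - 1 / ((n : ℝ) + 2)
        = (((n : ℝ) + 1) * ((n : ℝ) + 2))⁻¹ := by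
      rw [eq_comm, inv_eq_iff_eq_inv]
      field_simp
      ring
    rw [e1, e2]
    apply inv_anti₀ (by positivity)
    nlinarith [Nat.cast_nonneg (α := ℝ) n]
  calc ∑ n ∈ s, ((n : ℝ) + 2) ^ (-(2 : ℝ))
      ≤ ∑ n ∈ Finset.range N, ((n : ℝ) + 2) ^ (-(2 : ℝ)) :=
        Finset.sum_le_sum_of_subset_of_nonneg hN (fun n _ _ => by positivity)
    _ ≤ ∑ n ∈ Finset.range N, (1 / ((n : ℝ) + 1) - 1 / ((n : ℝ) + 2)) :=
        Finset.sum_le_sum fun n _ => hterm n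
    _ ≤ 1 := by
        have h2 := Finset.sum_range_sub' (fun n : ℕ => 1 / ((n : ℝ) + 1)) N
        simp only [Nat.cast_add, Nat.cast_one] at h2
        have h3 : ∑ n ∈ Finset.range N, (1 / ((n : ℝ) + 1) - 1 / ((n : ℝ) + 2))
            = ∑ x ∈ Finset.range N, (1 / ((x : ℝ) + 1) - 1 / ((x : ℝ) + 1 + 1)) :=
          Finset.sum_congr rfl fun n _ => by ring_nf
        have h4 : 0 ≤ 1 / ((N : ℝ) + 1) := by positivity
        rw [h3, h2]
        norm_num
        linarith

lemma summable_zeta {s : ℝ} (hs : 2 ≤ s) :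
    Summable (fun n : ℕ => ((n : ℝ) + 1) ^ (-s)) := by
  have h : Summable (fun n : ℕ => ((n : ℝ)) ^ (-s)) :=
    Real.summable_nat_rpow.mpr (by linarith)
  have h2 := (summable_nat_add_iff 1).mpr h
  refine h2.congr fun n => ?_
  push_cast
  ring_nf

lemma tsum_zeta_le {s : ℝ} (hs : 2 ≤ s) :
    (∑' n : ℕ, ((n : ℝ) + 1) ^ (-s)) ≤ 1 + 2 ^ ((2 : ℝ) - s) := by
  have hf := summable_zeta hs
  rw [hf.tsum_eq_zero_add]
  have h0 : ((0 : ℕ) : ℝ) + 1 = 1 := by norm_num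
  rw [h0, Real.one_rpow]
  have hterm : ∀ n : ℕ, (((n : ℕ) + 1 : ℕ) : ℝ) + 1 = (n : ℝ) + 2 := by
    intro n; push_cast; ring
  have hmono : ∀ n : ℕ, (((n + 1 : ℕ) : ℝ) + 1) ^ (-s)
      ≤ 2 ^ ((2 : ℝ) - s) * ((n : ℝ) + 2) ^ (-(2 : ℝ)) := by
    intro n
    rw [hterm n]
    have hb : (2 : ℝ) ≤ (n : ℝ) + 2 := by
      have := Nat.cast_nonneg (α := ℝ) n; linarith
    calc ((n : ℝ) + 2) ^ (-s)
        = ((n : ℝ) + 2) ^ (((2 : ℝ) - s) + (-(2 : ℝ))) := by ring_nf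
      _ = ((n : ℝ) + 2) ^ ((2 : ℝ) - s) * ((n : ℝ) + 2) ^ (-(2 : ℝ)) :=
          Real.rpow_add (by linarith) _ _
      _ ≤ 2 ^ ((2 : ℝ) - s) * ((n : ℝ) + 2) ^ (-(2 : ℝ)) := by
          apply mul_le_mul_of_nonneg_right
          · exact Real.rpow_le_rpow_of_nonpos two_pos hb (by linarith)
          · positivity
  have htail : (∑' n : ℕ, (((n + 1 : ℕ) : ℝ) + 1) ^ (-s)) ≤ 2 ^ ((2 : ℝ) - s) := by
    calc (∑' n : ℕ, (((n + 1 : ℕ) : ℝ) + 1) ^ (-s))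
        ≤ ∑' n : ℕ, 2 ^ ((2 : ℝ) - s) * ((n : ℝ) + 2) ^ (-(2 : ℝ)) := by
          apply Summable.tsum_le_tsum hmono ((summable_nat_add_iff 1).mpr hf)
          exact summable_shift2.mul_left _
      _ = 2 ^ ((2 : ℝ) - s) * ∑' n : ℕ, ((n : ℝ) + 2) ^ (-(2 : ℝ)) := tsum_mul_left
      _ ≤ 2 ^ ((2 : ℝ) - s) * 1 := by
          apply mul_le_mul_of_nonneg_left tsum_shift2_le (by positivity)
      _ = 2 ^ ((2 : ℝ) - s) := mul_one _
  linarith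


lemma term_nonneg (T : ℝ) (g : ℕ) {r : ℕ} {l : Fin (r + 1) → ℕ} (hl : Antitone l) :
    0 ≤ Real.exp (-(T / 2) * casimirA r l) * dimA r l ^ (2 - 2 * (g : ℤ)) := by
  have h1 : (0 : ℝ) < dimA r l := lt_of_lt_of_le zero_lt_one (one_le_dimA hl)
  positivity

lemma term_le_prod {T : ℝ} (hT : 0 ≤ T) {g : ℕ} (hg : 2 ≤ g) {r : ℕ}
    {l : Fin (r + 1) → ℕ} (hl : Antitone l) (h0 : l (Fin.last r) = 0) :
    Real.exp (-(T / 2) * casimirA r l) * dimA r l ^ (2 - 2 * (g : ℤ))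
      ≤ ∏ k : Fin r, ((gaps r l k : ℝ) + 1) ^ (-(sexp r k)) := by
  have hd1 : 1 ≤ dimA r l := one_le_dimA hl
  have hdpos : (0 : ℝ) < dimA r l := lt_of_lt_of_le zero_lt_one hd1
  have hexp1 : Real.exp (-(T / 2) * casimirA r l) ≤ 1 := by
    rw [Real.exp_le_one_iff]
    have h2 := casimirA_nonneg hl
    nlinarith
  have hz : dimA r l ^ (2 - 2 * (g : ℤ)) ≤ dimA r l ^ (-2 : ℤ) :=
    zpow_le_zpow_right₀ hd1 (by omega)
  have hprod : ∏ k : Fin r, ((gaps r l k : ℝ) + 1) ^ (sexp r k) ≤ dimA r l ^ (2 : ℕ) := by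
    have he : ∏ k : Fin r, ((gaps r l k : ℝ) + 1) ^ (sexp r k)
        = Real.exp (∑ k : Fin r, sexp r k * Real.log ((gaps r l k : ℝ) + 1)) := by
      rw [Real.exp_sum]
      refine Finset.prod_congr rfl fun k _ => ?_
      rw [Real.rpow_def_of_pos (by positivity)]
      ring_nf
    rw [he]
    have h3 : ∑ k : Fin r, sexp r k * Real.log ((gaps r l k : ℝ) + 1)
        ≤ 2 * Real.log (dimA r l) := by
      have h4 := log_dimA_ge hl h0
      have h5 : ∑ k : Fin r, sexp r k * Real.log ((gaps r l k : ℝ) + 1)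
          = 2 * ∑ k : Fin r, (sexp r k / 2) * Real.log ((gaps r l k : ℝ) + 1) := by
        rw [Finset.mul_sum]
        exact Finset.sum_congr rfl fun k _ => by ring
      rw [h5]
      linarith
    calc Real.exp (∑ k : Fin r, sexp r k * Real.log ((gaps r l k : ℝ) + 1))
        ≤ Real.exp (2 * Real.log (dimA r l)) := Real.exp_le_exp.mpr h3
      _ = dimA r l ^ (2 : ℕ) := by
          rw [show (2 : ℝ) * Real.log (dimA r l) = ((2 : ℕ) : ℝ) * Real.log (dimA r l) by
            norm_num]
          rw [← Real.log_pow, Real.exp_log (by positivity)]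
  have hinv : dimA r l ^ (-2 : ℤ) ≤ ∏ k : Fin r, ((gaps r l k : ℝ) + 1) ^ (-(sexp r k)) := by
    have e1 : ∏ k : Fin r, ((gaps r l k : ℝ) + 1) ^ (-(sexp r k))
        = (∏ k : Fin r, ((gaps r l k : ℝ) + 1) ^ (sexp r k))⁻¹ := by
      rw [← Finset.prod_inv_distrib]
      refine Finset.prod_congr rfl fun k _ => ?_
      rw [Real.rpow_neg (by positivity)]
    have e2 : dimA r l ^ (-2 : ℤ) = (dimA r l ^ (2 : ℕ))⁻¹ := by
      rw [zpow_neg]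
      norm_cast
    rw [e1, e2]
    apply inv_anti₀
    · positivity
    · exact hprod
  have hznn : (0 : ℝ) ≤ dimA r l ^ (2 - 2 * (g : ℤ)) := by positivity
  calc Real.exp (-(T / 2) * casimirA r l) * dimA r l ^ (2 - 2 * (g : ℤ))
      ≤ 1 * dimA r l ^ (2 - 2 * (g : ℤ)) := mul_le_mul_of_nonneg_right hexp1 hznn
    _ = dimA r l ^ (2 - 2 * (g : ℤ)) := one_mul _
    _ ≤ dimA r l ^ (-2 : ℤ) := hz
    _ ≤ _ := hinv

lemma tsum_pi_prod : ∀ (n : ℕ) (w : Fin n → ℕ → ENNReal),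
    ∑' a : Fin n → ℕ, ∏ k, w k (a k) = ∏ k, ∑' m, w k m := by
  intro n
  induction n with
  | zero =>
    intro w
    have h1 : ∀ a : Fin 0 → ℕ, ∏ k : Fin 0, w k (a k) = 1 := fun a => by simp
    simp only [h1]
    rw [tsum_eq_single (fun i => i.elim0) (fun b hb => by
      exact absurd (funext fun i => i.elim0) hb)]
    simp
  | succ n ih =>
    intro w
    have he := (Fin.consEquiv (fun _ : Fin (n + 1) => ℕ)).tsum_eq
      (fun a : Fin (n + 1) → ℕ => ∏ k, w k (a k))
    rw [← he, ENNReal.tsum_prod']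
    have hin : ∀ (x : ℕ) (b : Fin n → ℕ),
        ∏ k : Fin (n + 1), w k ((Fin.consEquiv (fun _ : Fin (n + 1) => ℕ)) (x, b) k)
        = w 0 x * ∏ k : Fin n, w k.succ (b k) := by
      intro x b
      rw [Fin.prod_univ_succ]
      simp [Fin.consEquiv]
    calc ∑' (x : ℕ) (b : Fin n → ℕ),
          ∏ k : Fin (n + 1), w k ((Fin.consEquiv (fun _ : Fin (n + 1) => ℕ)) (x, b) k)
        = ∑' (x : ℕ) (b : Fin n → ℕ), w 0 x * ∏ k : Fin n, w k.succ (b k) := by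
          congr 1; funext x; congr 1; funext b; exact hin x b
      _ = ∑' (x : ℕ), w 0 x * ∑' (b : Fin n → ℕ), ∏ k : Fin n, w k.succ (b k) := by
          congr 1; funext x; exact ENNReal.tsum_mul_left
      _ = (∑' (x : ℕ), w 0 x) * ∑' (b : Fin n → ℕ), ∏ k : Fin n, w k.succ (b k) :=
          ENNReal.tsum_mul_right
      _ = ∏ k : Fin (n + 1), ∑' m, w k m := by
          rw [ih (fun k => w k.succ), Fin.prod_univ_succ]


noncomputable def delta (r : ℕ) : ℝ := ∑ k : Fin r, (2 : ℝ) ^ ((2 : ℝ) - sexp r k)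


lemma one_le_harmonic {n : ℕ} (hn : 1 ≤ n) : (1 : ℚ) ≤ harmonic n := by
  have h1 : harmonic 1 = 1 := by simp [harmonic]
  calc (1 : ℚ) = harmonic 1 := h1.symm
  _ ≤ harmonic n := by
      rw [harmonic, harmonic]
      apply Finset.sum_le_sum_of_subset_of_nonneg
      · exact Finset.range_subset_range.mpr hn
      · intro i _ _
        positivity

lemma two_le_sexp {r : ℕ} (k : Fin r) : 2 ≤ sexp r k := by
  rw [sexp]
  have h1 : (1 : ℚ) ≤ harmonic (r - (k : ℕ)) := one_le_harmonic (by have := k.isLt; omega)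
  have h2 : (1 : ℚ) ≤ harmonic ((k : ℕ) + 1) := one_le_harmonic (by omega)
  have h1' : (1 : ℝ) ≤ (harmonic (r - (k : ℕ)) : ℝ) := by exact_mod_cast h1
  have h2' : (1 : ℝ) ≤ (harmonic ((k : ℕ) + 1) : ℝ) := by exact_mod_cast h2
  linarith

lemma main_r (T : ℝ) (hT : 0 ≤ T) (g : ℕ) (hg : 2 ≤ g) (r : ℕ) :
    Summable (fun lam : {l : Fin (r + 1) → ℕ // Antitone l ∧ l (Fin.last r) = 0} =>
        Real.exp (-(T / 2) * casimirA r lam.1) * dimA r lam.1 ^ (2 - 2 * (g : ℤ)))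
    ∧ 1 ≤ (∑' lam : {l : Fin (r + 1) → ℕ // Antitone l ∧ l (Fin.last r) = 0},
        Real.exp (-(T / 2) * casimirA r lam.1) * dimA r lam.1 ^ (2 - 2 * (g : ℤ)))
    ∧ (∑' lam : {l : Fin (r + 1) → ℕ // Antitone l ∧ l (Fin.last r) = 0},
        Real.exp (-(T / 2) * casimirA r lam.1) * dimA r lam.1 ^ (2 - 2 * (g : ℤ)))
      ≤ Real.exp (delta r) := by
  set Λ := {l : Fin (r + 1) → ℕ // Antitone l ∧ l (Fin.last r) = 0} with hΛ
  set F : Λ → ℝ := fun lam =>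
    Real.exp (-(T / 2) * casimirA r lam.1) * dimA r lam.1 ^ (2 - 2 * (g : ℤ)) with hF
  have hFnn : ∀ l : Λ, 0 ≤ F l := fun l => term_nonneg T g l.2.1
  set w : Fin r → ℕ → ENNReal := fun k n =>
    ENNReal.ofReal (((n : ℝ) + 1) ^ (-(sexp r k))) with hw
  set G : (Fin r → ℕ) → ENNReal := fun a => ∏ k, w k (a k) with hG
  have hFle : ∀ l : Λ, ENNReal.ofReal (F l) ≤ G (gaps r l.1) := by
    intro l
    calc ENNReal.ofReal (F l)
        ≤ ENNReal.ofReal (∏ k : Fin r, ((gaps r l.1 k : ℝ) + 1) ^ (-(sexp r k))) :=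
          ENNReal.ofReal_le_ofReal (term_le_prod hT hg l.2.1 l.2.2)
      _ = ∏ k : Fin r, ENNReal.ofReal (((gaps r l.1 k : ℝ) + 1) ^ (-(sexp r k))) :=
          ENNReal.ofReal_prod_of_nonneg (fun k _ => by positivity)
      _ = G (gaps r l.1) := rfl
  have hWle : ∀ k : Fin r, (∑' n, w k n)
      ≤ ENNReal.ofReal (1 + 2 ^ ((2 : ℝ) - sexp r k)) := by
    intro k
    rw [hw]
    rw [← ENNReal.ofReal_tsum_of_nonneg (fun n => by positivity)
      (summable_zeta (two_le_sexp k))]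
    exact ENNReal.ofReal_le_ofReal (tsum_zeta_le (two_le_sexp k))
  have hprodW : (∏ k : Fin r, ∑' n, w k n) ≤ ENNReal.ofReal (Real.exp (delta r)) := by
    calc (∏ k : Fin r, ∑' n, w k n)
        ≤ ∏ k : Fin r, ENNReal.ofReal (1 + 2 ^ ((2 : ℝ) - sexp r k)) :=
          Finset.prod_le_prod' fun k _ => hWle k
      _ = ENNReal.ofReal (∏ k : Fin r, (1 + 2 ^ ((2 : ℝ) - sexp r k))) :=
          (ENNReal.ofReal_prod_of_nonneg (fun k _ => by positivity)).symm
      _ ≤ ENNReal.ofReal (Real.exp (delta r)) := by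
          apply ENNReal.ofReal_le_ofReal
          calc ∏ k : Fin r, (1 + 2 ^ ((2 : ℝ) - sexp r k))
              ≤ ∏ k : Fin r, Real.exp (2 ^ ((2 : ℝ) - sexp r k)) := by
                apply Finset.prod_le_prod (fun k _ => by positivity)
                intro k _
                have := Real.add_one_le_exp ((2 : ℝ) ^ ((2 : ℝ) - sexp r k))
                linarith
            _ = Real.exp (delta r) := by rw [delta, Real.exp_sum]
  have hTsum : (∑' l : Λ, ENNReal.ofReal (F l)) ≤ ENNReal.ofReal (Real.exp (delta r)) := by
    calc (∑' l : Λ, ENNReal.ofReal (F l))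
        ≤ ∑' l : Λ, G (gaps r l.1) := ENNReal.tsum_le_tsum hFle
      _ ≤ ∑' a : Fin r → ℕ, G a := ENNReal.tsum_comp_le_tsum_of_injective gaps_injective G
      _ = ∏ k : Fin r, ∑' n, w k n := tsum_pi_prod r w
      _ ≤ ENNReal.ofReal (Real.exp (delta r)) := hprodW
  have hne : (∑' l : Λ, ENNReal.ofReal (F l)) ≠ ⊤ :=
    (lt_of_le_of_lt hTsum ENNReal.ofReal_lt_top).ne
  have hsummable : Summable F := by
    have h := ENNReal.summable_toReal hne
    refine h.congr fun l => ?_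
    rw [ENNReal.toReal_ofReal (hFnn l)]
  refine ⟨hsummable, ?_, ?_⟩
  · set l₀ : Λ := ⟨fun _ => 0, fun _ _ _ => le_refl 0, rfl⟩ with hl₀
    have hF0 : F l₀ = 1 := by
      rw [hF]
      simp only [hl₀, casimirA_zero, dimA_zero]
      simp
    calc (1 : ℝ) = F l₀ := hF0.symm
    _ ≤ ∑' l : Λ, F l := Summable.le_tsum hsummable l₀ (fun j _ => hFnn j)
  · have h1 : ENNReal.ofReal (∑' l : Λ, F l) = ∑' l : Λ, ENNReal.ofReal (F l) :=
      ENNReal.ofReal_tsum_of_nonneg hFnn hsummable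
    have h2 : ENNReal.ofReal (∑' l : Λ, F l) ≤ ENNReal.ofReal (Real.exp (delta r)) := by
      rw [h1]; exact hTsum
    exact (ENNReal.ofReal_le_ofReal_iff (by positivity)).mp h2


lemma summable_shift2' {p : ℝ} (hp : p < -1) :
    Summable (fun n : ℕ => ((n : ℝ) + 2) ^ p) := by
  have h : Summable (fun n : ℕ => ((n : ℝ)) ^ p) := Real.summable_nat_rpow.mpr hp
  have h2 := (summable_nat_add_iff 2).mpr h
  refine h2.congr fun n => ?_
  push_cast
  ring_nf

lemma ab_split {A B R c : ℝ} (hc : 0 ≤ c) (hA : 0 < A) (hB : 0 < B) (hAB : A + B = R) :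
    A ^ (-c) * B ^ (-c) ≤ (R / 2) ^ (-c) * (A ^ (-c) + B ^ (-c)) := by
  have h2 : 0 ≤ A ^ (-c) := Real.rpow_nonneg hA.le _
  have h3 : 0 ≤ B ^ (-c) := Real.rpow_nonneg hB.le _
  rcases le_total A B with h | h
  · have h1 : B ^ (-c) ≤ (R / 2) ^ (-c) :=
      Real.rpow_le_rpow_of_nonpos (by linarith) (by linarith) (neg_nonpos.mpr hc)
    have h4 : 0 ≤ (R / 2) ^ (-c) := Real.rpow_nonneg (by linarith) _
    nlinarith
  · have h1 : A ^ (-c) ≤ (R / 2) ^ (-c) :=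
      Real.rpow_le_rpow_of_nonpos (by linarith) (by linarith) (neg_nonpos.mpr hc)
    have h4 : 0 ≤ (R / 2) ^ (-c) := Real.rpow_nonneg (by linarith) _
    nlinarith

lemma delta_tendsto : Tendsto (fun r : ℕ => delta r) atTop (nhds 0) := by
  set c : ℝ := Real.log 2 with hc
  have hc0 : 0 < c := Real.log_pos one_lt_two
  have hc12 : 1 / 2 < c := by
    have := Real.log_two_gt_d9
    rw [hc]
    linarith
  have h2c : -(2 * c) < -1 := by linarith
  set K : ℝ := ∑' j : ℕ, ((j : ℝ) + 2) ^ (-(2 * c)) with hK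
  have hK0 : 0 ≤ K := tsum_nonneg fun j => Real.rpow_nonneg (by positivity) _
  set C : ℝ := 8 * 2 ^ c * Real.sqrt K with hC
  have hC0 : 0 ≤ C := by positivity
  -- pointwise bound
  have hpt : ∀ (r : ℕ) (k : Fin r), (2 : ℝ) ^ ((2 : ℝ) - sexp r k)
      ≤ 4 * (((r : ℝ) - ((k : ℕ) : ℝ) + 1) ^ (-c) * (((k : ℕ) : ℝ) + 2) ^ (-c)) := by
    intro r k
    have hkr : (k : ℕ) < r := k.isLt
    have hkcast : ((k : ℕ) : ℝ) ≤ (r : ℝ) := Nat.cast_le.mpr hkr.le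
    set A : ℝ := (r : ℝ) - ((k : ℕ) : ℝ) + 1 with hA
    set B : ℝ := ((k : ℕ) : ℝ) + 2 with hB
    have hApos : 0 < A := by rw [hA]; linarith
    have hBpos : 0 < B := by rw [hB]; positivity
    have hlogs : Real.log A + Real.log B ≤ sexp r k := by
      have h1 := log_add_one_le_harmonic (r - (k : ℕ))
      have h2 := log_add_one_le_harmonic ((k : ℕ) + 1)
      have e1 : ((r - (k : ℕ) + 1 : ℕ) : ℝ) = A := by
        rw [hA]; push_cast [Nat.cast_sub hkr.le]; ring
      have e2 : (((k : ℕ) + 1 + 1 : ℕ) : ℝ) = B := by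
        rw [hB]; push_cast; ring
      rw [e1] at h1
      rw [e2] at h2
      rw [sexp]
      linarith
    have h42 : (2 : ℝ) ^ (2 : ℝ) = 4 := by
      rw [Real.rpow_two]; norm_num
    have h4 : (2 : ℝ) ^ ((2 : ℝ) - sexp r k)
        = 4 * (2 : ℝ) ^ (-sexp r k) := by
      rw [sub_eq_add_neg, Real.rpow_add two_pos, h42]
    have h5 : (2 : ℝ) ^ (-sexp r k) ≤ (2 : ℝ) ^ (-(Real.log A + Real.log B)) :=
      Real.rpow_le_rpow_of_exponent_le one_le_two (neg_le_neg hlogs)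
    have h6 : (2 : ℝ) ^ (-(Real.log A + Real.log B)) = A ^ (-c) * B ^ (-c) := by
      rw [Real.rpow_def_of_pos two_pos, Real.rpow_def_of_pos hApos,
        Real.rpow_def_of_pos hBpos, ← Real.exp_add]
      congr 1
      rw [hc]
      ring
    rw [h4]
    rw [← h6]
    linarith
  -- eventual bound
  have hev : ∀ r : ℕ, 1 ≤ r → delta r ≤ C * (r : ℝ) ^ ((1 : ℝ) / 2 - c) := by
    intro r hr
    have hr0 : (0 : ℝ) < (r : ℝ) := by positivity
    set S : ℝ := ∑ j ∈ Finset.range r, ((j : ℝ) + 2) ^ (-c) with hS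
    have hS0 : 0 ≤ S := Finset.sum_nonneg fun j _ => Real.rpow_nonneg (by positivity) _
    -- Cauchy–Schwarz
    have hSsq : S ^ 2 ≤ K * r := by
      have hcs := Finset.sum_mul_sq_le_sq_mul_sq (Finset.range r)
        (fun j => ((j : ℝ) + 2) ^ (-c)) (fun _ => 1)
      simp only [mul_one, one_pow] at hcs
      have e1 : ∑ j ∈ Finset.range r, (((j : ℝ) + 2) ^ (-c)) ^ 2
          = ∑ j ∈ Finset.range r, ((j : ℝ) + 2) ^ (-(2 * c)) := by
        refine Finset.sum_congr rfl fun j _ => ?_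
        rw [← Real.rpow_natCast (((j : ℝ) + 2) ^ (-c)) 2, ← Real.rpow_mul (by positivity)]
        norm_num
        ring_nf
      have e2 : ∑ j ∈ Finset.range r, ((j : ℝ) + 2) ^ (-(2 * c)) ≤ K :=
        Summable.sum_le_tsum _ (fun j _ => Real.rpow_nonneg (by positivity) _) (summable_shift2' h2c)
      have e3 : (∑ _j ∈ Finset.range r, (1 : ℝ)) = (r : ℝ) := by simp
      rw [e1, e3] at hcs
      calc S ^ 2 ≤ (∑ j ∈ Finset.range r, ((j : ℝ) + 2) ^ (-(2 * c))) * (r : ℝ) := hcs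
      _ ≤ K * r := by apply mul_le_mul_of_nonneg_right e2 hr0.le
    have hSle : S ≤ Real.sqrt K * Real.sqrt r := by
      rw [← Real.sqrt_mul hK0]
      calc S = Real.sqrt (S ^ 2) := (Real.sqrt_sq hS0).symm
      _ ≤ Real.sqrt (K * r) := Real.sqrt_le_sqrt hSsq
    -- sum bound
    have hsum1 : delta r ≤ 4 * (((r : ℝ) + 3) / 2) ^ (-c) * (2 * S) := by
      have hstep1 : delta r ≤ ∑ k : Fin r,
          4 * ((((r : ℝ) + 3) / 2) ^ (-c) *
            ((((r : ℝ) - ((k : ℕ) : ℝ) + 1) ^ (-c)) + ((((k : ℕ) : ℝ) + 2) ^ (-c)))) := by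
        rw [delta]
        apply Finset.sum_le_sum
        intro k _
        have h1 := hpt r k
        have hkr : (k : ℕ) < r := k.isLt
        have hkcast : ((k : ℕ) : ℝ) ≤ (r : ℝ) := Nat.cast_le.mpr hkr.le
        have h2 := ab_split (A := (r : ℝ) - ((k : ℕ) : ℝ) + 1) (B := ((k : ℕ) : ℝ) + 2)
          (R := (r : ℝ) + 3) hc0.le (by linarith) (by positivity) (by ring)
        linarith
      have hstep2 : ∑ k : Fin r,
          4 * ((((r : ℝ) + 3) / 2) ^ (-c) *
            ((((r : ℝ) - ((k : ℕ) : ℝ) + 1) ^ (-c)) + ((((k : ℕ) : ℝ) + 2) ^ (-c))))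
          = 4 * (((r : ℝ) + 3) / 2) ^ (-c) *
            (∑ k ∈ Finset.range r, (((r : ℝ) - (k : ℝ) + 1) ^ (-c) + ((k : ℝ) + 2) ^ (-c))) := by
        rw [Finset.mul_sum, Fin.sum_univ_eq_sum_range
          (fun k => 4 * ((((r : ℝ) + 3) / 2) ^ (-c) *
            ((((r : ℝ) - (k : ℝ) + 1) ^ (-c)) + (((k : ℝ) + 2) ^ (-c)))))]
        exact Finset.sum_congr rfl fun k _ => by ring
      have hrefl : ∑ k ∈ Finset.range r, (((r : ℝ) - (k : ℝ) + 1) ^ (-c))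
          = ∑ j ∈ Finset.range r, (((j : ℝ) + 2) ^ (-c)) := by
        rw [← Finset.sum_range_reflect (fun j => (((j : ℝ) + 2) ^ (-c))) r]
        refine Finset.sum_congr rfl fun j hj => ?_
        have hj' := Finset.mem_range.mp hj
        congr 1
        push_cast [Nat.cast_sub (by omega : j + 1 ≤ r), Nat.cast_sub (by omega : j ≤ r - 1)]
        have : ((r - 1 : ℕ) : ℝ) = (r : ℝ) - 1 := by
          push_cast [Nat.cast_sub (by omega : 1 ≤ r)]; ring
        rw [this]
        ring
      have hsplitsum : ∑ k ∈ Finset.range r,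
          (((r : ℝ) - (k : ℝ) + 1) ^ (-c) + ((k : ℝ) + 2) ^ (-c)) = 2 * S := by
        rw [Finset.sum_add_distrib, hrefl, hS]
        ring
      rw [hstep2, hsplitsum] at hstep1
      exact hstep1
    -- convert to the final shape
    have hhalf : (0 : ℝ) < (r : ℝ) / 2 := by positivity
    have hmono : (((r : ℝ) + 3) / 2) ^ (-c) ≤ ((r : ℝ) / 2) ^ (-c) :=
      Real.rpow_le_rpow_of_nonpos hhalf (by linarith) (neg_nonpos.mpr hc0.le)
    have hdiv : ((r : ℝ) / 2) ^ (-c) = (r : ℝ) ^ (-c) * 2 ^ c := by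
      rw [Real.div_rpow hr0.le (by norm_num : (0:ℝ) ≤ 2), Real.rpow_neg (by norm_num : (0:ℝ) ≤ 2)]
      field_simp
    have hfin : 4 * (((r : ℝ) + 3) / 2) ^ (-c) * (2 * S)
        ≤ C * (r : ℝ) ^ ((1 : ℝ) / 2 - c) := by
      have h8 : 4 * (((r : ℝ) + 3) / 2) ^ (-c) * (2 * S)
          ≤ 8 * (((r : ℝ) / 2) ^ (-c)) * S := by
        have hpow0 : 0 ≤ (((r : ℝ) + 3) / 2) ^ (-c) := Real.rpow_nonneg (by positivity) _
        nlinarith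
      have h9 : 8 * (((r : ℝ) / 2) ^ (-c)) * S
          ≤ 8 * (((r : ℝ) / 2) ^ (-c)) * (Real.sqrt K * Real.sqrt r) := by
        have hpow0 : 0 ≤ ((r : ℝ) / 2) ^ (-c) := Real.rpow_nonneg hhalf.le _
        nlinarith
      have h10 : 8 * (((r : ℝ) / 2) ^ (-c)) * (Real.sqrt K * Real.sqrt r)
          = C * ((r : ℝ) ^ (-c) * (r : ℝ) ^ ((1 : ℝ) / 2)) := by
        simp only [hdiv, hC, Real.sqrt_eq_rpow]
        ring
      have h11 : (r : ℝ) ^ (-c) * (r : ℝ) ^ ((1 : ℝ) / 2) = (r : ℝ) ^ ((1 : ℝ) / 2 - c) := by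
        rw [← Real.rpow_add hr0]
        ring_nf
      calc 4 * (((r : ℝ) + 3) / 2) ^ (-c) * (2 * S)
          ≤ 8 * (((r : ℝ) / 2) ^ (-c)) * S := h8
        _ ≤ 8 * (((r : ℝ) / 2) ^ (-c)) * (Real.sqrt K * Real.sqrt r) := h9
        _ = C * ((r : ℝ) ^ (-c) * (r : ℝ) ^ ((1 : ℝ) / 2)) := h10
        _ = C * (r : ℝ) ^ ((1 : ℝ) / 2 - c) := by rw [h11]
    linarith
  -- put together
  apply squeeze_zero' (Eventually.of_forall fun r =>
    Finset.sum_nonneg fun k _ => Real.rpow_nonneg (by norm_num) _)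
  · filter_upwards [eventually_ge_atTop 1] with r hr
    exact hev r hr
  · have h := (tendsto_rpow_neg_atTop (show (0 : ℝ) < c - 1 / 2 by linarith)).comp
      tendsto_natCast_atTop_atTop
    have h2 : (fun r : ℕ => C * ((r : ℝ) ^ (-(c - 1 / 2))))
        = fun r : ℕ => C * ((r : ℝ) ^ ((1 : ℝ) / 2 - c)) := by
      funext r
      congr 1
      ring_nf
    have h3 := h.const_mul C
    simp only [Function.comp] at h3
    rw [h2] at h3
    simpa using h3


end YMA

/-- Higher-genus Yang–Mills partition function limit for `SU(r+1)` (type `A_r`):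
for `g ≥ 2` and `T ≥ 0`, `Z_{g,T,A_r} = Σ_{λ ∈ Λ_r^A} e^{-(T/2) c_λ^A} (d_λ^A)^{2-2g}`
converges for every `r ≥ 1` and tends to `1` as `r → ∞`. -/
theorem higher_genus_partition_function_limit_A (T : ℝ) (hT : 0 ≤ T) (g : ℕ) (hg : 2 ≤ g) :
    (∀ r : ℕ, 1 ≤ r →
      Summable fun lam : {l : Fin (r + 1) → ℕ // Antitone l ∧ l (Fin.last r) = 0} =>
        Real.exp (-(T / 2) * casimirA r lam.1) * dimA r lam.1 ^ (2 - 2 * (g : ℤ))) ∧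
    Tendsto
      (fun r : ℕ => ∑' lam : {l : Fin (r + 1) → ℕ // Antitone l ∧ l (Fin.last r) = 0},
        Real.exp (-(T / 2) * casimirA r lam.1) * dimA r lam.1 ^ (2 - 2 * (g : ℤ)))
      atTop (nhds 1) := by
  constructor
  · intro r _
    exact (YMA.main_r T hT g hg r).1
  · have hub : Tendsto (fun r : ℕ => Real.exp (YMA.delta r)) atTop (nhds 1) := by
      have h := (Real.continuous_exp.tendsto 0).comp YMA.delta_tendsto
      simpa [Function.comp_def] using h
    apply tendsto_of_tendsto_of_tendsto_of_le_of_le' (g := fun _ : ℕ => (1 : ℝ))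
      (h := fun r : ℕ => Real.exp (YMA.delta r)) tendsto_const_nhds hub
    · exact Filter.Eventually.of_forall fun r => (YMA.main_r T hT g hg r).2.1
    · exact Filter.Eventually.of_forall fun r => (YMA.main_r T hT g hg r).2.2
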